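/- arXiv:2510.20476 — 5 statements merged into one kernel-verified Lean document; each statement's English description precedes it below -/
import Mathlib

section
/- Let μ ≥ δ > 0 and λ > -μ(μ+3δ)/(μ+2δ). Then there exists β > 0 such that for every real 3×3 matrix B = (b_{lm}) one has μ·(Σ_{j=1}^3 (b_{j1}² + b_{j2}²)) + δ·(Σ_{j=1}^3 b_{j3}²) + (μ+λ)·(b_{11}+b_{22}+b_{33})² ≥ β·|B|², where |B|² = Σ_{l,m} b_{lm}². -/
lemma diag_bound (μ δ ν x y z : ℝ) (hμδ : δ ≤ μ) (hδ : 0 < δ) (hν : ν < 0)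
    (hK : 0 < μ * δ + ν * (μ + 2 * δ)) :
    (μ * δ + ν * (μ + 2 * δ)) * (x ^ 2 + y ^ 2 + z ^ 2) ≤
      μ ^ 2 * x ^ 2 + μ ^ 2 * y ^ 2 + μ * δ * z ^ 2 + μ * ν * (x + y + z) ^ 2 := by
  have hcs : 0 ≤ (μ + 2 * δ) * (μ * x ^ 2 + μ * y ^ 2 + δ * z ^ 2)
      - μ * δ * (x + y + z) ^ 2 := by
    nlinarith [sq_nonneg (x - y), sq_nonneg (μ * x - δ * z), sq_nonneg (μ * y - δ * z),
      mul_pos (lt_of_lt_of_le hδ hμδ) hδ]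
  have hν' : 0 ≤ -ν := by linarith
  have h1 : 0 ≤ (-ν) * ((μ + 2 * δ) * (μ * x ^ 2 + μ * y ^ 2 + δ * z ^ 2)
      - μ * δ * (x + y + z) ^ 2) := mul_nonneg hν' hcs
  have h2 : 0 ≤ (μ * δ + ν * (μ + 2 * δ)) * (μ - δ) * x ^ 2 :=
    mul_nonneg (mul_nonneg hK.le (by linarith)) (sq_nonneg x)
  have h3 : 0 ≤ (μ * δ + ν * (μ + 2 * δ)) * (μ - δ) * y ^ 2 :=
    mul_nonneg (mul_nonneg hK.le (by linarith)) (sq_nonneg y)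
  nlinarith [mul_pos hδ hδ, mul_pos (lt_of_lt_of_le hδ hμδ) hδ]

/-- Strong ellipticity of the anisotropic Lamé operator. -/
theorem anisotropic_strong_ellipticity (μ δ lam : ℝ) (hμδ : δ ≤ μ) (hδ : 0 < δ)
    (hlam : -(μ * (μ + 3 * δ) / (μ + 2 * δ)) < lam) :
    ∃ β > (0 : ℝ), ∀ B : Matrix (Fin 3) (Fin 3) ℝ,
      β * (∑ l, ∑ m, (B l m) ^ 2) ≤
        μ * (∑ j, ((B j 0) ^ 2 + (B j 1) ^ 2)) + δ * (∑ j, (B j 2) ^ 2)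
          + (μ + lam) * (B 0 0 + B 1 1 + B 2 2) ^ 2 := by
  have hμ : 0 < μ := lt_of_lt_of_le hδ hμδ
  set ν := μ + lam with hνdef
  have hden : 0 < μ + 2 * δ := by linarith
  have hK : 0 < μ * δ + ν * (μ + 2 * δ) := by
    have h := (lt_div_iff₀ hden).mp (neg_lt.mp hlam)
    nlinarith
  rcases lt_or_ge ν 0 with hν | hν
  · refine ⟨(μ * δ + ν * (μ + 2 * δ)) / μ, div_pos hK hμ, fun B => ?_⟩
    rw [div_mul_eq_mul_div, div_le_iff₀ hμ]
    simp only [Fin.sum_univ_three]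
    have hd := diag_bound μ δ ν (B 0 0) (B 1 1) (B 2 2) hμδ hδ hν hK
    -- off-diagonal coefficients: K ≤ μ * δ ≤ μ * μ since ν < 0
    have hKδ : μ * δ + ν * (μ + 2 * δ) ≤ μ * δ := by nlinarith
    have hKμ : μ * δ + ν * (μ + 2 * δ) ≤ μ * μ := by nlinarith
    nlinarith [sq_nonneg (B 0 1), sq_nonneg (B 0 2), sq_nonneg (B 1 0), sq_nonneg (B 1 2),
      sq_nonneg (B 2 0), sq_nonneg (B 2 1)]
  · refine ⟨δ, hδ, fun B => ?_⟩
    simp only [Fin.sum_univ_three]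
    nlinarith [mul_nonneg hν (sq_nonneg (B 0 0 + B 1 1 + B 2 2)),
      sq_nonneg (B 0 0), sq_nonneg (B 0 1), sq_nonneg (B 1 0), sq_nonneg (B 1 1),
      sq_nonneg (B 2 0), sq_nonneg (B 2 1)]
end

section
/- Let μ ≥ δ > 0 and λ > -μ(μ+3δ)/(μ+2δ). Then the function f : ℝ^{3×3} → ℝ defined by f(B) = μ·(Σ_{j=1}^3 (b_{j1}² + b_{j2}²)) + δ·(Σ_{j=1}^3 b_{j3}²) + (μ+λ)·(b_{11}+b_{22}+b_{33})² is strictly convex. -/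
/-- Core 3-variable positivity. -/
lemma tri_pos (μ δ k a b c : ℝ) (hμδ : δ ≤ μ) (hδ : 0 < δ)
    (hk : -(μ * δ) < k * (μ + 2 * δ)) (h : a ≠ 0 ∨ b ≠ 0 ∨ c ≠ 0) :
    0 < μ * (a ^ 2 + b ^ 2) + δ * c ^ 2 + k * (a + b + c) ^ 2 := by
  have hμ : 0 < μ := lt_of_lt_of_le hδ hμδ
  by_cases hs : a + b + c = 0
  · rw [hs]
    have habc : a ≠ 0 ∨ b ≠ 0 := by
      rcases h with h | h | h
      · exact Or.inl h
      · exact Or.inr h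
      · rcases eq_or_ne a 0 with rfl | ha
        · refine Or.inr fun hb => h ?_
          subst hb; linarith
        · exact Or.inl ha
    rcases habc with ha | hb
    · have : 0 < μ * a ^ 2 := by positivity
      nlinarith [sq_nonneg b, sq_nonneg c]
    · have : 0 < μ * b ^ 2 := by positivity
      nlinarith [sq_nonneg a, sq_nonneg c]
  · have hs2 : 0 < (a + b + c) ^ 2 := by positivity
    have hpos : 0 < μ + 2 * δ := by linarith
    have T1 : 0 ≤ μ * (2 * δ + μ) * (a - b) ^ 2 := by positivity
    have T2 : 0 ≤ (μ * (a + b) - 2 * δ * c) ^ 2 := sq_nonneg _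
    have T3 : 0 < (k * (μ + 2 * δ) + μ * δ) * (a + b + c) ^ 2 := by
      apply mul_pos _ hs2; linarith
    nlinarith [T1, T2, T3, hpos]

lemma tri_nonneg (μ δ k a b c : ℝ) (hμδ : δ ≤ μ) (hδ : 0 < δ)
    (hk : -(μ * δ) < k * (μ + 2 * δ)) :
    0 ≤ μ * (a ^ 2 + b ^ 2) + δ * c ^ 2 + k * (a + b + c) ^ 2 := by
  by_cases h : a = 0 ∧ b = 0 ∧ c = 0
  · obtain ⟨rfl, rfl, rfl⟩ := h; norm_num
  · exact le_of_lt (tri_pos μ δ k a b c hμδ hδ hk (by tauto))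

/-- Positivity of the full 9-variable quadratic form. -/
lemma Qpos (μ δ k : ℝ) (hμδ : δ ≤ μ) (hδ : 0 < δ)
    (hk : -(μ * δ) < k * (μ + 2 * δ))
    (e00 e01 e02 e10 e11 e12 e20 e21 e22 : ℝ)
    (h : e00 ≠ 0 ∨ e01 ≠ 0 ∨ e02 ≠ 0 ∨ e10 ≠ 0 ∨ e11 ≠ 0 ∨ e12 ≠ 0 ∨
         e20 ≠ 0 ∨ e21 ≠ 0 ∨ e22 ≠ 0) :
    0 < μ * ((e00 ^ 2 + e01 ^ 2) + (e10 ^ 2 + e11 ^ 2) + (e20 ^ 2 + e21 ^ 2))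
      + δ * (e02 ^ 2 + e12 ^ 2 + e22 ^ 2) + k * (e00 + e11 + e22) ^ 2 := by
  have hμ : 0 < μ := lt_of_lt_of_le hδ hμδ
  have htri := tri_nonneg μ δ k e00 e11 e22 hμδ hδ hk
  have n01 : 0 ≤ μ * e01 ^ 2 := by positivity
  have n10 : 0 ≤ μ * e10 ^ 2 := by positivity
  have n20 : 0 ≤ μ * e20 ^ 2 := by positivity
  have n21 : 0 ≤ μ * e21 ^ 2 := by positivity
  have n02 : 0 ≤ δ * e02 ^ 2 := by positivity
  have n12 : 0 ≤ δ * e12 ^ 2 := by positivity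
  rcases h with h | h | h | h | h | h | h | h | h
  · have := tri_pos μ δ k e00 e11 e22 hμδ hδ hk (Or.inl h); linarith
  · have : 0 < μ * e01 ^ 2 := by positivity
    linarith
  · have : 0 < δ * e02 ^ 2 := by positivity
    linarith
  · have : 0 < μ * e10 ^ 2 := by positivity
    linarith
  · have := tri_pos μ δ k e00 e11 e22 hμδ hδ hk (Or.inr (Or.inl h)); linarith
  · have : 0 < δ * e12 ^ 2 := by positivity
    linarith
  · have : 0 < μ * e20 ^ 2 := by positivity
    linarith
  · have : 0 < μ * e21 ^ 2 := by positivity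
    linarith
  · have := tri_pos μ δ k e00 e11 e22 hμδ hδ hk (Or.inr (Or.inr h)); linarith

/-- Strict convexity of the anisotropic dissipation quadratic form. -/
theorem anisotropic_dissipation_strictConvex (μ δ lam : ℝ) (hμδ : δ ≤ μ) (hδ : 0 < δ)
    (hlam : -(μ * (μ + 3 * δ) / (μ + 2 * δ)) < lam) :
    StrictConvexOn ℝ (Set.univ : Set (Matrix (Fin 3) (Fin 3) ℝ))
      (fun B : Matrix (Fin 3) (Fin 3) ℝ =>
        μ * (∑ j, ((B j 0) ^ 2 + (B j 1) ^ 2)) + δ * (∑ j, (B j 2) ^ 2)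
          + (μ + lam) * (B 0 0 + B 1 1 + B 2 2) ^ 2) := by
  have hμ : 0 < μ := lt_of_lt_of_le hδ hμδ
  have hden : 0 < μ + 2 * δ := by linarith
  have h1 : -(μ * (μ + 3 * δ)) < lam * (μ + 2 * δ) := by
    have h2 := mul_lt_mul_of_pos_right hlam hden
    rw [neg_mul, div_mul_cancel₀ _ hden.ne'] at h2
    linarith
  have hk : -(μ * δ) < (μ + lam) * (μ + 2 * δ) := by nlinarith
  refine ⟨convex_univ, fun x _ y _ hxy a b ha hb hab => ?_⟩
  obtain rfl : b = 1 - a := by linarith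
  have hne : ∃ i j, x i j ≠ y i j := by
    by_contra hc
    push_neg at hc
    exact hxy (by ext i j; exact hc i j)
  obtain ⟨i, j, hij⟩ := hne
  have hsub : x i j - y i j ≠ 0 := sub_ne_zero.mpr hij
  have hdisj : (x 0 0 - y 0 0) ≠ 0 ∨ (x 0 1 - y 0 1) ≠ 0 ∨ (x 0 2 - y 0 2) ≠ 0 ∨
      (x 1 0 - y 1 0) ≠ 0 ∨ (x 1 1 - y 1 1) ≠ 0 ∨ (x 1 2 - y 1 2) ≠ 0 ∨
      (x 2 0 - y 2 0) ≠ 0 ∨ (x 2 1 - y 2 1) ≠ 0 ∨ (x 2 2 - y 2 2) ≠ 0 := by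
    fin_cases i <;> fin_cases j <;> simp_all
  have key := Qpos μ δ (μ + lam) hμδ hδ hk
    (x 0 0 - y 0 0) (x 0 1 - y 0 1) (x 0 2 - y 0 2)
    (x 1 0 - y 1 0) (x 1 1 - y 1 1) (x 1 2 - y 1 2)
    (x 2 0 - y 2 0) (x 2 1 - y 2 1) (x 2 2 - y 2 2) hdisj
  have hab2 : 0 < a * (1 - a) := mul_pos ha hb
  simp only [Fin.sum_univ_three, Matrix.add_apply, Matrix.smul_apply, smul_eq_mul]
  linarith [mul_pos hab2 key]
end

section
/- The 9×9 Hessian matrix of the quadratic form f(B) = μ·(Σ_{j=1}^3 (b_{j1}² + b_{j2}²)) + δ·(Σ_{j=1}^3 b_{j3}²) + (μ+λ)·(b_{11}+b_{22}+b_{33})² (with respect to the nine entries b_{lm}) has eigenvalues 2μ (with multiplicity 5), 2δ (with multiplicity 2), and 4μ+δ+3λ ± √(12μ²+δ²+9λ²−4μδ+20μλ−2λδ) (each with multiplicity 1). -/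
/-!
Polarizing `f = ∑ w_p b_p² + (μ + λ) (tr B)²` gives `H = 2 diag(w) + 2(μ + λ) t tᵀ`, where `t` is
the indicator of the diagonal positions `(i, i)`. Listing these positions first makes `H`
block diagonal: a `6 × 6` diagonal block with entries `2μ, 2μ, 2μ, 2μ, 2δ, 2δ`, and the
`3 × 3` block `diag(2μ, 2μ, 2δ) + 2(μ + λ) J`. The latter has the eigenvalue `2μ` (eigenvector
`(1, -1, 0)`), and its remaining quadratic factor has discriminant
`4 ((δ - 2μ - λ)² + 8 (μ + λ)²) ≥ 0`, whence the two real roots.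
-/

open Polynomial

section Polarization

variable {m n : Type*} [Fintype m] [Fintype n]

theorem polar_of_eq_weighted_sum_sq_add_sq (w t : Matrix m n ℝ) (c : ℝ) {f : Matrix m n ℝ → ℝ}
    (hf : ∀ B, f B = ∑ i, ∑ j, w i j * B i j ^ 2 + c * (∑ i, ∑ j, t i j * B i j) ^ 2)
    (A B : Matrix m n ℝ) :
    f (A + B) - f A - f B = 2 * ∑ i, ∑ j, w i j * A i j * B i j
      + 2 * c * (∑ i, ∑ j, t i j * A i j) * (∑ i, ∑ j, t i j * B i j) := by
  have hw : ∀ i j, w i j * (A + B) i j ^ 2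
      = w i j * A i j ^ 2 + w i j * B i j ^ 2 + 2 * (w i j * A i j * B i j) := by
    intro i j; simp only [Matrix.add_apply]; ring
  have ht : ∀ i j, t i j * (A + B) i j = t i j * A i j + t i j * B i j := by
    intro i j; simp only [Matrix.add_apply]; ring
  simp only [hf, hw, ht, Finset.sum_add_distrib, ← Finset.mul_sum]
  ring

variable [DecidableEq m] [DecidableEq n]

theorem sum_sum_mul_single_one (t : Matrix m n ℝ) (a : m) (b : n) :
    ∑ i, ∑ j, t i j * Matrix.single a b 1 i j = t a b := by
  simp [Matrix.single, ite_and]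

theorem sum_sum_mul_single_one_mul_single_one (w : Matrix m n ℝ) (p q : m × n) :
    ∑ i, ∑ j, w i j * Matrix.single p.1 p.2 1 i j * Matrix.single q.1 q.2 1 i j =
      if p = q then w p.1 p.2 else 0 := by
  split_ifs with h
  · subst h
    simp [Matrix.single, ite_and]
  · simp [Matrix.single, ite_and, Prod.ext_iff] at h ⊢
    grind

theorem polar_single_of_eq_weighted_sum_sq_add_sq (w t : Matrix m n ℝ) (c : ℝ)
    {f : Matrix m n ℝ → ℝ}
    (hf : ∀ B, f B = ∑ i, ∑ j, w i j * B i j ^ 2 + c * (∑ i, ∑ j, t i j * B i j) ^ 2)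
    (p q : m × n) :
    f (Matrix.single p.1 p.2 1 + Matrix.single q.1 q.2 1)
        - f (Matrix.single p.1 p.2 1) - f (Matrix.single q.1 q.2 1) =
      2 * (if p = q then w p.1 p.2 else 0) + 2 * c * t p.1 p.2 * t q.1 q.2 := by
  rw [polar_of_eq_weighted_sum_sq_add_sq w t c hf, sum_sum_mul_single_one_mul_single_one,
    sum_sum_mul_single_one, sum_sum_mul_single_one]

end Polarization

def columnWeight (μ δ : ℝ) : Matrix (Fin 3) (Fin 3) ℝ :=
  Matrix.of fun _ j => if j = 2 then δ else μ

theorem dissipation_eq_weighted_sum_sq_add_sq (μ δ lam : ℝ) (B : Matrix (Fin 3) (Fin 3) ℝ) :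
    μ * (∑ j, ((B j 0) ^ 2 + (B j 1) ^ 2)) + δ * (∑ j, (B j 2) ^ 2)
        + (μ + lam) * (B 0 0 + B 1 1 + B 2 2) ^ 2 =
      ∑ i, ∑ j, columnWeight μ δ i j * B i j ^ 2
        + (μ + lam) * (∑ i, ∑ j, (1 : Matrix (Fin 3) (Fin 3) ℝ) i j * B i j) ^ 2 := by
  simp [columnWeight, Fin.sum_univ_three, Matrix.one_apply]
  ring

/-- The diagonal positions `(i, i)` come first, so that the trace term of the Hessian
lives in a single block. -/
def hessianIdx : (Fin 3 × Fin 3) ≃ (Fin 3 ⊕ Fin 6) where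
  toFun p := ![![Sum.inl 0, Sum.inr 0, Sum.inr 4],
               ![Sum.inr 1, Sum.inl 1, Sum.inr 5],
               ![Sum.inr 2, Sum.inr 3, Sum.inl 2]] p.1 p.2
  invFun := Sum.elim ![(0, 0), (1, 1), (2, 2)] ![(0, 1), (1, 0), (2, 0), (2, 1), (0, 2), (1, 2)]
  left_inv := by decide
  right_inv := by decide

theorem reindex_hessianIdx_eq_fromBlocks (μ δ c : ℝ)
    (H : Matrix (Fin 3 × Fin 3) (Fin 3 × Fin 3) ℝ)
    (hH : ∀ p q, H p q = 2 * (if p = q then columnWeight μ δ p.1 p.2 else 0)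
      + 2 * c * (1 : Matrix (Fin 3) (Fin 3) ℝ) p.1 p.2 * (1 : Matrix (Fin 3) (Fin 3) ℝ) q.1 q.2) :
    Matrix.reindex hessianIdx hessianIdx H =
      Matrix.fromBlocks (Matrix.diagonal ![2 * μ, 2 * μ, 2 * δ] + Matrix.of fun _ _ => 2 * c) 0 0
        (Matrix.diagonal ![2 * μ, 2 * μ, 2 * μ, 2 * μ, 2 * δ, 2 * δ]) := by
  ext (i | i) (j | j) <;> fin_cases i <;> fin_cases j <;> simp [hessianIdx, hH, columnWeight]

theorem charpoly_diagonal_fin_three_add_const (μ δ c : ℝ) :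
    (Matrix.diagonal ![μ, μ, δ] + Matrix.of fun _ _ => c).charpoly =
      (X - C μ) * (X ^ 2 - C (μ + δ + 3 * c) * X + C (μ * δ + c * (μ + 2 * δ))) := by
  rw [Matrix.charpoly, Matrix.det_fin_three]
  simp [map_ofNat]
  ring

theorem X_sq_sub_C_mul_X_add_C_eq_mul_of_nonneg (b d : ℝ) (hd : 0 ≤ d) :
    (X ^ 2 - C (2 * b) * X + C (b ^ 2 - d) : ℝ[X]) = (X - C (b + √d)) * (X - C (b - √d)) := by
  have hsq : C √d * C √d = C d := by rw [← C_mul, Real.mul_self_sqrt hd]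
  simp only [C_mul, C_add, C_sub, C_pow, C_ofNat]
  linear_combination hsq

/-- The 9×9 Hessian matrix of the anisotropic dissipation quadratic form `f`
(obtained from `f` by polarization, since `f` is quadratic) has eigenvalues
`2μ` (multiplicity 5), `2δ` (multiplicity 2) and
`4μ+δ+3λ ± √(12μ²+δ²+9λ²−4μδ+20μλ−2λδ)` (each with multiplicity 1),
expressed via the factorization of its characteristic polynomial. -/
theorem hessian_eigenvalues (μ δ lam : ℝ)
    (f : Matrix (Fin 3) (Fin 3) ℝ → ℝ)
    (hf : ∀ B : Matrix (Fin 3) (Fin 3) ℝ,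
      f B = μ * (∑ j, ((B j 0) ^ 2 + (B j 1) ^ 2)) + δ * (∑ j, (B j 2) ^ 2)
          + (μ + lam) * (B 0 0 + B 1 1 + B 2 2) ^ 2)
    (H : Matrix (Fin 3 × Fin 3) (Fin 3 × Fin 3) ℝ)
    (hH : ∀ p q : Fin 3 × Fin 3,
      H p q = f (Matrix.single p.1 p.2 1 + Matrix.single q.1 q.2 1)
        - f (Matrix.single p.1 p.2 1) - f (Matrix.single q.1 q.2 1)) :
    H.charpoly =
      (X - C (2 * μ)) ^ 5 * (X - C (2 * δ)) ^ 2
        * (X - C (4 * μ + δ + 3 * lam +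
            Real.sqrt (12 * μ ^ 2 + δ ^ 2 + 9 * lam ^ 2 - 4 * μ * δ + 20 * μ * lam - 2 * lam * δ)))
        * (X - C (4 * μ + δ + 3 * lam -
            Real.sqrt (12 * μ ^ 2 + δ ^ 2 + 9 * lam ^ 2 - 4 * μ * δ + 20 * μ * lam - 2 * lam * δ))) := by
  set Δ := 12 * μ ^ 2 + δ ^ 2 + 9 * lam ^ 2 - 4 * μ * δ + 20 * μ * lam - 2 * lam * δ with hΔ_def
  have hΔ : 0 ≤ Δ := by
    have : Δ = (δ - 2 * μ - lam) ^ 2 + 8 * (μ + lam) ^ 2 := by ring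
    rw [this]
    positivity
  have hf' : ∀ B, f B = ∑ i, ∑ j, columnWeight μ δ i j * B i j ^ 2
      + (μ + lam) * (∑ i, ∑ j, (1 : Matrix (Fin 3) (Fin 3) ℝ) i j * B i j) ^ 2 := fun B =>
    (hf B).trans (dissipation_eq_weighted_sum_sq_add_sq μ δ lam B)
  have hH' := fun p q => (hH p q).trans (polar_single_of_eq_weighted_sum_sq_add_sq _ _ _ hf' p q)
  rw [← Matrix.charpoly_reindex hessianIdx, reindex_hessianIdx_eq_fromBlocks μ δ _ H hH',
    Matrix.charpoly_fromBlocks_zero₁₂, charpoly_diagonal_fin_three_add_const,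
    Matrix.charpoly_diagonal, Fin.prod_univ_six, mul_assoc _ (X - C (_ + √Δ)),
    ← X_sq_sub_C_mul_X_add_C_eq_mul_of_nonneg _ _ hΔ]
  simp only [hΔ_def, Matrix.cons_val, map_add, map_sub, map_mul, map_pow, map_ofNat]
  ring
end

section
/- For any M > 0 there exists c(M) > 0 such that for every w ∈ W^{1,2}(ℝ³) and every measurable set V ⊂ ℝ³ with Lebesgue measure |V| ≤ M, one has ‖w‖²_{L²(ℝ³)} ≤ c(M)·(‖∇w‖²_{L²(ℝ³)} + ∫_{ℝ³∖V} w² dy). -/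
/-! Write `w x = w (x + h) - (w (x + h) - w x)`. By the fundamental theorem of calculus along
segments and Jensen's inequality, the translation difference has `L²` norm at most
`‖h‖ ‖∇w‖₂`, so `∫_V w² ≤ 2 ‖h‖² ‖∇w‖₂² + 2 ∫_V w (x + h)² dx`. Averaging over `h` in a ball
`B` with `|B| ≥ 4 |V|`, Tonelli and translation invariance bound the average of the last term
by `(2 |V| / |B|) ‖w‖₂² ≤ ‖w‖₂² / 2`, which is absorbed into the left side once
`∫_{Vᶜ} w²` is added to both sides. -/

open MeasureTheory Set Metric Filter
open scoped ENNReal NNReal Topology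

theorem ENNReal.add_sq_le_two_mul (a b : ℝ≥0∞) : (a + b) ^ 2 ≤ 2 * (a ^ 2 + b ^ 2) := by
  have := ENNReal.rpow_add_le_mul_rpow_add_rpow a b one_le_two
  norm_num [ENNReal.rpow_two] at this
  exact this

theorem ENNReal.le_two_mul_add_of_mul_le {b v S A SV Sc : ℝ≥0∞} (hb₀ : b ≠ 0) (hb : b ≠ ∞)
    (hS : S ≠ ∞) (hv : 4 * v ≤ b) (hsplit : S ≤ SV + Sc) (h : b * SV ≤ b * A + 2 * (v * S)) :
    S ≤ 2 * (A + Sc) := by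
  have hbS : b * S ≠ ∞ := ENNReal.mul_ne_top hb hS
  have hvS : 2 * (2 * (v * S)) ≤ b * S :=
    calc 2 * (2 * (v * S)) = 4 * v * S := by ring
      _ ≤ b * S := by gcongr
  have : b * S + b * S ≤ b * S + b * (2 * (A + Sc)) := by
    calc b * S + b * S = 2 * (b * S) := (two_mul _).symm
      _ ≤ 2 * (b * A + 2 * (v * S) + b * Sc) := by
        gcongr
        calc b * S ≤ b * (SV + Sc) := by gcongr
          _ = b * SV + b * Sc := mul_add _ _ _
          _ ≤ _ := by gcongr
      _ = 2 * (2 * (v * S)) + b * (2 * (A + Sc)) := by ring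
      _ ≤ b * S + b * (2 * (A + Sc)) := by gcongr
  exact (ENNReal.mul_le_mul_iff_right hb₀ hb).1 (ENNReal.le_of_add_le_add_left hbS this)

theorem enorm_sub_le_lintegral_enorm_deriv {F : Type*} [NormedAddCommGroup F] [NormedSpace ℝ F]
    [CompleteSpace F] {g : ℝ → F} {a b : ℝ} (hab : a ≤ b) (hgc : ContinuousOn g (Icc a b))
    (hgd : DifferentiableOn ℝ g (Ioo a b)) :
    ‖g b - g a‖ₑ ≤ ∫⁻ t in Icc a b, ‖deriv g t‖ₑ := by
  by_cases hfin : ∫⁻ t in Icc a b, ‖deriv g t‖ₑ = ∞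
  · simp [hfin]
  have hint : IntegrableOn (deriv g) (Icc a b) :=
    ⟨aestronglyMeasurable_deriv g _, lt_top_iff_ne_top.2 hfin⟩
  have hle := norm_sub_le_integral_of_norm_deriv_le_of_le hab hgc hgd
    (.of_forall fun _ _ => le_rfl) ((intervalIntegrable_iff_integrableOn_Icc_of_le hab).2 hint.norm)
  rw [intervalIntegral.integral_of_le hab, integral_Icc_eq_integral_Ioc.symm] at hle
  rw [← ofReal_norm, ← ofReal_integral_norm_eq_lintegral_enorm hint]
  exact ENNReal.ofReal_le_ofReal hle

theorem sq_lintegral_le_lintegral_sq {α : Type*} [MeasurableSpace α] {μ : Measure α}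
    [IsProbabilityMeasure μ] {f : α → ℝ≥0∞} (hf : AEMeasurable f μ) :
    (∫⁻ x, f x ∂μ) ^ 2 ≤ ∫⁻ x, f x ^ 2 ∂μ := by
  have := eLpNorm_le_eLpNorm_of_exponent_le (μ := μ) one_le_two hf.aestronglyMeasurable
  rw [eLpNorm_one_eq_lintegral_enorm,
    eLpNorm_eq_lintegral_rpow_enorm_toReal two_ne_zero (by simp)] at this
  simp only [enorm_eq_self, ENNReal.toReal_ofNat] at this
  calc (∫⁻ x, f x ∂μ) ^ 2 ≤ ((∫⁻ x, f x ^ (2:ℝ) ∂μ) ^ (1 / 2 : ℝ)) ^ 2 := by gcongr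
    _ = ∫⁻ x, f x ^ 2 ∂μ := by
      rw [← ENNReal.rpow_natCast, ← ENNReal.rpow_mul]; norm_num

theorem lintegral_lintegral_comp_add_right {G β : Type*} [AddGroup G] [MeasurableSpace G]
    [MeasurableAdd₂ G] {μ : Measure G} [SFinite μ] [μ.IsAddRightInvariant] [MeasurableSpace β]
    {ν : Measure β} [SFinite ν] {f : G → ℝ≥0∞} (hf : Measurable f) {φ : β → G}
    (hφ : Measurable φ) :
    ∫⁻ x, ∫⁻ t, f (x + φ t) ∂ν ∂μ = ν univ * ∫⁻ x, f x ∂μ := by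
  rw [lintegral_lintegral_swap (f := fun x t => f (x + φ t))
    (hf.comp (measurable_fst.add (hφ.comp measurable_snd))).aemeasurable]
  simp only [lintegral_add_right_eq_self f, lintegral_const, mul_comm]

section Translation

variable {E F : Type*} [NormedAddCommGroup E] [NormedSpace ℝ E] [NormedAddCommGroup F]
  [NormedSpace ℝ F] [CompleteSpace F] {w : E → F}

theorem enorm_sub_sq_le_lintegral_fderiv_segment (hw : Differentiable ℝ w) (x h : E) :
    ‖w (x + h) - w x‖ₑ ^ 2 ≤ ‖h‖ₑ ^ 2 * ∫⁻ t in Icc (0 : ℝ) 1, ‖fderiv ℝ w (x + t • h)‖ₑ ^ 2 := by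
  set g : ℝ → F := fun t => w (x + t • h)
  have hg : ∀ t, HasDerivAt g (fderiv ℝ w (x + t • h) h) t := fun t =>
    (hw _).hasFDerivAt.comp_hasDerivAt t
      (by simpa using ((hasDerivAt_id t).smul_const h).const_add x)
  have hgd : Differentiable ℝ g := fun t => (hg t).differentiableAt
  have : IsProbabilityMeasure (volume.restrict (Icc (0 : ℝ) 1)) := ⟨by simp⟩
  calc ‖w (x + h) - w x‖ₑ ^ 2 = ‖g 1 - g 0‖ₑ ^ 2 := by simp [g]
    _ ≤ (∫⁻ t in Icc (0 : ℝ) 1, ‖deriv g t‖ₑ) ^ 2 := by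
      gcongr
      exact enorm_sub_le_lintegral_enorm_deriv zero_le_one hgd.continuous.continuousOn
        hgd.differentiableOn
    _ ≤ ∫⁻ t in Icc (0 : ℝ) 1, ‖deriv g t‖ₑ ^ 2 :=
      sq_lintegral_le_lintegral_sq (aestronglyMeasurable_deriv g _).enorm
    _ ≤ ∫⁻ t in Icc (0 : ℝ) 1, ‖h‖ₑ ^ 2 * ‖fderiv ℝ w (x + t • h)‖ₑ ^ 2 := by
      gcongr with t
      rw [(hg t).deriv, ← mul_pow, mul_comm]
      gcongr
      exact ContinuousLinearMap.le_opENorm _ _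
    _ = ‖h‖ₑ ^ 2 * ∫⁻ t in Icc (0 : ℝ) 1, ‖fderiv ℝ w (x + t • h)‖ₑ ^ 2 :=
      lintegral_const_mul' _ _ (by simp)

variable [MeasurableSpace E] [BorelSpace E] [SecondCountableTopology E] (μ : Measure E)
  [SFinite μ] [μ.IsAddRightInvariant]

theorem lintegral_enorm_sub_translate_sq_le (hw : Differentiable ℝ w) (h : E) :
    ∫⁻ x, ‖w (x + h) - w x‖ₑ ^ 2 ∂μ ≤ ‖h‖ₑ ^ 2 * ∫⁻ x, ‖fderiv ℝ w x‖ₑ ^ 2 ∂μ :=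
  calc ∫⁻ x, ‖w (x + h) - w x‖ₑ ^ 2 ∂μ
      ≤ ∫⁻ x, ‖h‖ₑ ^ 2 * ∫⁻ t in Icc (0 : ℝ) 1, ‖fderiv ℝ w (x + t • h)‖ₑ ^ 2 ∂volume ∂μ :=
        lintegral_mono fun x => enorm_sub_sq_le_lintegral_fderiv_segment hw x h
    _ = ‖h‖ₑ ^ 2 * ∫⁻ x, ‖fderiv ℝ w x‖ₑ ^ 2 ∂μ := by
      rw [lintegral_const_mul' _ _ (by simp), lintegral_lintegral_comp_add_right
        ((measurable_fderiv ℝ w).enorm.pow_const 2) (φ := fun t : ℝ => t • h) (by fun_prop)]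
      simp

theorem setLIntegral_enorm_sq_le_translate (hw : Differentiable ℝ w) (V : Set E) (h : E) :
    ∫⁻ x in V, ‖w x‖ₑ ^ 2 ∂μ ≤
      2 * (‖h‖ₑ ^ 2 * ∫⁻ x, ‖fderiv ℝ w x‖ₑ ^ 2 ∂μ + ∫⁻ x in V, ‖w (x + h)‖ₑ ^ 2 ∂μ) :=
  calc ∫⁻ x in V, ‖w x‖ₑ ^ 2 ∂μ
      ≤ ∫⁻ x in V, 2 * (‖w (x + h) - w x‖ₑ ^ 2 + ‖w (x + h)‖ₑ ^ 2) ∂μ := by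
        gcongr with x
        calc ‖w x‖ₑ ^ 2 ≤ (‖w (x + h) - w x‖ₑ + ‖w (x + h)‖ₑ) ^ 2 := by
              gcongr
              calc ‖w x‖ₑ = ‖w (x + h) - (w (x + h) - w x)‖ₑ := by rw [sub_sub_cancel]
                _ ≤ _ := enorm_sub_le.trans_eq (add_comm _ _)
          _ ≤ _ := ENNReal.add_sq_le_two_mul _ _
    _ = 2 * (∫⁻ x in V, ‖w (x + h) - w x‖ₑ ^ 2 ∂μ + ∫⁻ x in V, ‖w (x + h)‖ₑ ^ 2 ∂μ) := by
        rw [lintegral_const_mul' _ _ (by simp), lintegral_add_right]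
        exact (hw.continuous.comp (continuous_add_const h)).enorm.measurable.pow_const 2
    _ ≤ _ := by
        gcongr
        exact (setLIntegral_le_lintegral _ _).trans (lintegral_enorm_sub_translate_sq_le μ hw h)

theorem measure_closedBall_mul_setLIntegral_enorm_sq_le (hw : Differentiable ℝ w) (V : Set E)
    (r : ℝ≥0) :
    μ (closedBall 0 r) * ∫⁻ x in V, ‖w x‖ₑ ^ 2 ∂μ ≤
      μ (closedBall 0 r) * (2 * (r ^ 2 * ∫⁻ x, ‖fderiv ℝ w x‖ₑ ^ 2 ∂μ)) +
        2 * (μ V * ∫⁻ x, ‖w x‖ₑ ^ 2 ∂μ) := by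
  set D := ∫⁻ x, ‖fderiv ℝ w x‖ₑ ^ 2 ∂μ
  have hf : Measurable fun x => ‖w x‖ₑ ^ 2 := hw.continuous.enorm.measurable.pow_const 2
  have hmeas : Measurable fun h => ∫⁻ x in V, ‖w (x + h)‖ₑ ^ 2 ∂μ :=
    (hf.comp (measurable_snd.add measurable_fst)).lintegral_prod_right'
  calc μ (closedBall 0 r) * ∫⁻ x in V, ‖w x‖ₑ ^ 2 ∂μ
      = ∫⁻ _ in closedBall 0 r, ∫⁻ x in V, ‖w x‖ₑ ^ 2 ∂μ ∂μ := by
        rw [setLIntegral_const, mul_comm]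
    _ ≤ ∫⁻ h in closedBall 0 r, 2 * (r ^ 2 * D) + 2 * ∫⁻ x in V, ‖w (x + h)‖ₑ ^ 2 ∂μ ∂μ := by
        refine setLIntegral_mono (by fun_prop) fun h hh => ?_
        have hhr : ‖h‖ₑ ≤ r := by
          rw [← ofReal_norm, ← ENNReal.ofReal_coe_nnreal]
          exact ENNReal.ofReal_le_ofReal (mem_closedBall_zero_iff.1 hh)
        grw [setLIntegral_enorm_sq_le_translate μ hw V h, hhr, mul_add]
    _ ≤ μ (closedBall 0 r) * (2 * (r ^ 2 * D)) +
          2 * ∫⁻ h, ∫⁻ x in V, ‖w (h + x)‖ₑ ^ 2 ∂μ ∂μ := by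
        rw [lintegral_add_left measurable_const, setLIntegral_const, mul_comm,
          lintegral_const_mul' _ _ (by simp)]
        simp only [add_comm _ (_ : E)]
        gcongr
        exact Measure.restrict_le_self
    _ = _ := by
        rw [lintegral_lintegral_comp_add_right hf (φ := fun x : E => x) measurable_id]
        simp

end Translation

section AddHaar

variable {E F : Type*} [NormedAddCommGroup E] [NormedSpace ℝ E] [FiniteDimensional ℝ E]
  [MeasurableSpace E] [BorelSpace E] (μ : Measure E) [μ.IsAddHaarMeasure]
  [NormedAddCommGroup F] [NormedSpace ℝ F] [CompleteSpace F]

theorem lintegral_enorm_sq_le_of_four_mul_measure_le {w : E → F} (hw : Differentiable ℝ w)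
    (hS : ∫⁻ x, ‖w x‖ₑ ^ 2 ∂μ ≠ ∞) {V : Set E} {r : ℝ≥0} (hr : 0 < r)
    (hV : 4 * μ V ≤ μ (closedBall 0 r)) :
    ∫⁻ x, ‖w x‖ₑ ^ 2 ∂μ ≤
      2 * (2 * (r ^ 2 * ∫⁻ x, ‖fderiv ℝ w x‖ₑ ^ 2 ∂μ) + ∫⁻ x in Vᶜ, ‖w x‖ₑ ^ 2 ∂μ) := by
  refine ENNReal.le_two_mul_add_of_mul_le (measure_closedBall_pos μ 0 (mod_cast hr)).ne'
    measure_closedBall_lt_top.ne hS hV ?_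
    (measure_closedBall_mul_setLIntegral_enorm_sq_le μ hw V r)
  simpa using lintegral_union_le (fun x => ‖w x‖ₑ ^ 2) V Vᶜ (μ := μ)

theorem exists_pos_le_measure_closedBall [Nontrivial E] {M : ℝ≥0∞} (hM : M ≠ ∞) :
    ∃ r : ℝ≥0, 0 < r ∧ M ≤ μ (closedBall 0 r) := by
  have hlim := tendsto_measure_iUnion_atTop (μ := μ) (s := fun n : ℕ => closedBall (0 : E) n)
    fun m n hmn => closedBall_subset_closedBall (by exact_mod_cast hmn)
  rw [iUnion_closedBall_nat, measure_univ_of_isAddLeftInvariant] at hlim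
  obtain ⟨n, hn, hMn⟩ := ((eventually_gt_atTop 0).and (hlim.eventually_const_le hM.lt_top)).exists
  exact ⟨n, by exact_mod_cast hn, by simpa using hMn⟩

end AddHaar

theorem integral_norm_sq_eq_toReal_lintegral {α G : Type*} [MeasurableSpace α] {μ : Measure α}
    [NormedAddCommGroup G] {f : α → G} (hf : AEStronglyMeasurable f μ) :
    ∫ x, ‖f x‖ ^ 2 ∂μ = (∫⁻ x, ‖f x‖ₑ ^ 2 ∂μ).toReal := by
  rw [integral_eq_lintegral_of_nonneg_ae (f := fun x => ‖f x‖ ^ 2)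
    (.of_forall fun _ => by positivity) (hf.norm.pow 2)]
  simp_rw [ENNReal.ofReal_pow (norm_nonneg _), ofReal_norm]

theorem MeasureTheory.MemLp.lintegral_enorm_sq_ne_top {α G : Type*} [MeasurableSpace α]
    {μ : Measure α} [NormedAddCommGroup G] {f : α → G} (hf : MemLp f 2 μ) :
    ∫⁻ x, ‖f x‖ₑ ^ 2 ∂μ ≠ ∞ := by
  simpa [enorm_pow] using (hf.integrable_norm_pow two_ne_zero).hasFiniteIntegral.ne

theorem poincare_outside_small_set_general (M : ℝ) :
    ∃ c : ℝ, 0 < c ∧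
      ∀ w : EuclideanSpace ℝ (Fin 3) → ℝ, Differentiable ℝ w →
        MemLp w 2 volume → MemLp (fun y => ‖fderiv ℝ w y‖) 2 volume →
        ∀ V : Set (EuclideanSpace ℝ (Fin 3)), MeasurableSet V →
          volume V ≤ ENNReal.ofReal M →
          ∫ y, (w y) ^ 2 ≤
            c * ((∫ y, ‖fderiv ℝ w y‖ ^ 2) + ∫ y in Vᶜ, (w y) ^ 2) := by
  obtain ⟨r, hr, hball⟩ :=
    exists_pos_le_measure_closedBall (volume : Measure (EuclideanSpace ℝ (Fin 3)))
      (M := 4 * ENNReal.ofReal M) (by finiteness)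
  refine ⟨4 * r ^ 2 + 2, by positivity, fun w hw hw2 hDw V _ hVM => ?_⟩
  have hS := hw2.lintegral_enorm_sq_ne_top
  have hD : ∫⁻ y, ‖fderiv ℝ w y‖ₑ ^ 2 ≠ ∞ := by simpa using hDw.lintegral_enorm_sq_ne_top
  have hSc : ∫⁻ y in Vᶜ, ‖w y‖ₑ ^ 2 ≠ ∞ := ne_top_of_le_ne_top hS (setLIntegral_le_lintegral _ _)
  have key := lintegral_enorm_sq_le_of_four_mul_measure_le volume hw hS hr
    ((mul_le_mul_right hVM 4).trans hball)
  have hsq : ∀ y, w y ^ 2 = ‖w y‖ ^ 2 := fun y => by rw [Real.norm_eq_abs, sq_abs]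
  simp_rw [hsq]
  rw [integral_norm_sq_eq_toReal_lintegral hw.continuous.aestronglyMeasurable,
    integral_norm_sq_eq_toReal_lintegral hw.continuous.aestronglyMeasurable,
    integral_norm_sq_eq_toReal_lintegral (measurable_fderiv ℝ w).aestronglyMeasurable]
  calc _ ≤ _ := ENNReal.toReal_mono (by finiteness) key
    _ = 4 * r ^ 2 * (∫⁻ y, ‖fderiv ℝ w y‖ₑ ^ 2).toReal +
          2 * (∫⁻ y in Vᶜ, ‖w y‖ₑ ^ 2).toReal := by
      rw [ENNReal.toReal_mul, ENNReal.toReal_add (by finiteness) hSc]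
      simp only [ENNReal.toReal_mul, ENNReal.toReal_pow, ENNReal.toReal_ofNat, ENNReal.coe_toReal]
      ring
    _ ≤ _ := by
      have hd := ENNReal.toReal_nonneg (a := ∫⁻ y, ‖fderiv ℝ w y‖ₑ ^ 2)
      have hsc := ENNReal.toReal_nonneg (a := ∫⁻ y in Vᶜ, ‖w y‖ₑ ^ 2)
      nlinarith [mul_nonneg (sq_nonneg (r : ℝ)) hsc]

/-- Poincaré-type inequality on `ℝ³`: the `L²` norm of a `W^{1,2}` function is
controlled by its gradient and its `L²` norm outside a set of measure at most `M`. -/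
theorem poincare_outside_small_set (M : ℝ) (hM : 0 < M) :
    ∃ c : ℝ, 0 < c ∧
      ∀ w : EuclideanSpace ℝ (Fin 3) → ℝ, Differentiable ℝ w →
        MemLp w 2 volume → MemLp (fun y => ‖fderiv ℝ w y‖) 2 volume →
        ∀ V : Set (EuclideanSpace ℝ (Fin 3)), MeasurableSet V →
          volume V ≤ ENNReal.ofReal M →
          ∫ y, (w y) ^ 2 ≤
            c * ((∫ y, ‖fderiv ℝ w y‖ ^ 2) + ∫ y in Vᶜ, (w y) ^ 2) :=
  poincare_outside_small_set_general M
end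

section
/- Let μ ≥ δ > 0 and λ > -μ(μ+3δ)/(μ+2δ), and let β = min{δ, (4μ+δ+3λ − √(12μ²+δ²+9λ²−4μδ+20μλ−2λδ))/2}. Then for every continuously differentiable vector field u : ℝ³ → ℝ³ and every point y, β·|∇u(y)|² ≤ μ·|∇_x u(y)|² + δ·|∂_z u(y)|² + (μ+λ)·|div u(y)|², where ∇_x denotes the gradient in the first two variables, ∂_z the derivative in the third variable, and |∇u|² the squared Frobenius norm of the full Jacobian. -/
set_option maxHeartbeats 800000 in
private lemma alg_aux (μ δ lam : ℝ) (hμδ : δ ≤ μ) (hδ : 0 < δ)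
    (hlam : -(μ * (μ + 3 * δ) / (μ + 2 * δ)) < lam) (a : Fin 3 → Fin 3 → ℝ) :
    min δ ((4 * μ + δ + 3 * lam -
        Real.sqrt (12 * μ ^ 2 + δ ^ 2 + 9 * lam ^ 2 - 4 * μ * δ + 20 * μ * lam - 2 * lam * δ)) / 2)
      * (∑ i, ∑ j, (a i j) ^ 2) ≤
    μ * (∑ i, ((a i 0) ^ 2 + (a i 1) ^ 2)) + δ * (∑ i, (a i 2) ^ 2)
      + (μ + lam) * (a 0 0 + a 1 1 + a 2 2) ^ 2 := by
  have h2δ : 0 < μ + 2 * δ := by linarith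
  rw [← neg_div, div_lt_iff₀ h2δ] at hlam
  have hDpos : (0:ℝ) ≤ 12 * μ ^ 2 + δ ^ 2 + 9 * lam ^ 2 - 4 * μ * δ + 20 * μ * lam - 2 * lam * δ := by
    nlinarith [sq_nonneg (2 * μ + lam - δ), sq_nonneg (μ + lam)]
  set s := Real.sqrt (12 * μ ^ 2 + δ ^ 2 + 9 * lam ^ 2 - 4 * μ * δ + 20 * μ * lam - 2 * lam * δ)
    with hsdef
  have hs0 : 0 ≤ s := Real.sqrt_nonneg _
  have hs2 : s ^ 2 = 12 * μ ^ 2 + δ ^ 2 + 9 * lam ^ 2 - 4 * μ * δ + 20 * μ * lam - 2 * lam * δ :=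
    Real.sq_sqrt hDpos
  have habs : (2 * μ + lam - δ) ^ 2 ≤ s ^ 2 := by nlinarith [sq_nonneg (μ + lam)]
  have hsle : 2 * μ + lam - δ ≤ s := by nlinarith [habs, hs0]
  have hsge : δ - 2 * μ - lam ≤ s := by nlinarith [habs, hs0]
  have hbδ : min δ ((4 * μ + δ + 3 * lam - s) / 2) ≤ δ := min_le_left _ _
  have hbμ : 0 ≤ μ - min δ ((4 * μ + δ + 3 * lam - s) / 2) := by linarith
  have key : ∀ x y z : ℝ,
      0 ≤ (μ - min δ ((4 * μ + δ + 3 * lam - s) / 2)) * x ^ 2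
        + (μ - min δ ((4 * μ + δ + 3 * lam - s) / 2)) * y ^ 2
        + (δ - min δ ((4 * μ + δ + 3 * lam - s) / 2)) * z ^ 2
        + (μ + lam) * (x + y + z) ^ 2 := by
    intro x y z
    rcases min_cases δ ((4 * μ + δ + 3 * lam - s) / 2) with ⟨hb, hle⟩ | ⟨hb, hlt⟩ <;> rw [hb]
    · -- b = δ ≤ t ; then μ + lam ≥ 0
      have hml : 0 ≤ μ + lam := by linarith
      have hid : (μ - δ) * x ^ 2 + (μ - δ) * y ^ 2 + (δ - δ) * z ^ 2
          + (μ + lam) * (x + y + z) ^ 2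
          = (μ - δ) * x ^ 2 + (μ - δ) * y ^ 2 + (μ + lam) * (x + y + z) ^ 2 := by ring
      rw [hid]
      have h1 := mul_nonneg (sub_nonneg.2 hμδ) (sq_nonneg x)
      have h2 := mul_nonneg (sub_nonneg.2 hμδ) (sq_nonneg y)
      have h3 := mul_nonneg hml (sq_nonneg (x + y + z))
      linarith
    · -- b = t < δ
      set t := (4 * μ + δ + 3 * lam - s) / 2 with htdef
      have hμt : 0 ≤ μ - t := by linarith
      have hδt : 0 ≤ δ - t := by linarith
      have h1 : t ^ 2 - (4 * μ + δ + 3 * lam) * t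
          + (μ ^ 2 + μ * lam + 3 * μ * δ + 2 * lam * δ) = 0 := by
        rw [htdef]; linear_combination hs2 / 4
      have hpt0 : 0 ≤ 3 * μ + 2 * lam - t := by rw [htdef]; linarith
      rcases eq_or_lt_of_le hpt0 with heq | hP
      · -- degenerate case: μ + lam = 0
        have hseq : s = δ - 2 * μ - lam := by rw [htdef] at heq; linarith
        have h8 : (μ + lam) ^ 2 = 0 := by
          have := hs2; rw [hseq] at this; nlinarith [this]
        have hml : μ + lam = 0 := by
          exact pow_eq_zero_iff two_ne_zero |>.mp h8
        have hz : (μ + lam) * (x + y + z) ^ 2 = 0 := by rw [hml]; ring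
        have h1' := mul_nonneg hμt (sq_nonneg x)
        have h2' := mul_nonneg hμt (sq_nonneg y)
        have h3' := mul_nonneg hδt (sq_nonneg z)
        linarith
      · have hform : (3 * μ + 2 * lam - t)
            * (2 * ((μ - t) * x ^ 2 + (μ - t) * y ^ 2 + (δ - t) * z ^ 2
                + (μ + lam) * (x + y + z) ^ 2))
            = (3 * μ + 2 * lam - t) * (μ - t) * (x - y) ^ 2
              + ((3 * μ + 2 * lam - t) * (x + y) + 2 * (μ + lam) * z) ^ 2
              + 2 * (t ^ 2 - (4 * μ + δ + 3 * lam) * t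
                  + (μ ^ 2 + μ * lam + 3 * μ * δ + 2 * lam * δ)) * z ^ 2 := by ring
        have hrhs : 0 ≤ (3 * μ + 2 * lam - t) * (μ - t) * (x - y) ^ 2
              + ((3 * μ + 2 * lam - t) * (x + y) + 2 * (μ + lam) * z) ^ 2
              + 2 * (t ^ 2 - (4 * μ + δ + 3 * lam) * t
                  + (μ ^ 2 + μ * lam + 3 * μ * δ + 2 * lam * δ)) * z ^ 2 := by
          have h1' := mul_nonneg (mul_nonneg hpt0 hμt) (sq_nonneg (x - y))
          have h2' := sq_nonneg ((3 * μ + 2 * lam - t) * (x + y) + 2 * (μ + lam) * z)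
          have h3' : 2 * (t ^ 2 - (4 * μ + δ + 3 * lam) * t
              + (μ ^ 2 + μ * lam + 3 * μ * δ + 2 * lam * δ)) * z ^ 2 = 0 := by
            rw [h1]; ring
          linarith
        have := (mul_nonneg_iff_of_pos_left hP).mp (hform ▸ hrhs)
        linarith
  simp only [Fin.sum_univ_three]
  nlinarith [key (a 0 0) (a 1 1) (a 2 2),
    mul_nonneg hbμ (sq_nonneg (a 0 1)), mul_nonneg hbμ (sq_nonneg (a 1 0)),
    mul_nonneg hbμ (sq_nonneg (a 2 0)), mul_nonneg hbμ (sq_nonneg (a 2 1)),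
    mul_nonneg (sub_nonneg.2 hbδ) (sq_nonneg (a 0 2)),
    mul_nonneg (sub_nonneg.2 hbδ) (sq_nonneg (a 1 2))]

/-- Coercivity of the anisotropic viscous dissipation: with
`β = min{δ, (4μ+δ+3λ − √(12μ²+δ²+9λ²−4μδ+20μλ−2λδ))/2}`, for every `C¹` vector
field `u : ℝ³ → ℝ³` the pointwise bound
`β|∇u|² ≤ μ|∇ₓu|² + δ|∂_z u|² + (μ+λ)|div u|²` holds, where `J y i j = ∂_j u_i(y)`. -/
theorem anisotropic_dissipation_coercive (μ δ lam : ℝ) (hμδ : δ ≤ μ) (hδ : 0 < δ)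
    (hlam : -(μ * (μ + 3 * δ) / (μ + 2 * δ)) < lam) :
    ∀ u : (Fin 3 → ℝ) → (Fin 3 → ℝ), ContDiff ℝ 1 u → ∀ y : Fin 3 → ℝ,
      min δ ((4 * μ + δ + 3 * lam -
          Real.sqrt (12 * μ ^ 2 + δ ^ 2 + 9 * lam ^ 2 - 4 * μ * δ + 20 * μ * lam - 2 * lam * δ)) / 2)
        * (∑ i, ∑ j, (fderiv ℝ u y (Pi.single j 1) i) ^ 2) ≤
      μ * (∑ i, ((fderiv ℝ u y (Pi.single 0 1) i) ^ 2 + (fderiv ℝ u y (Pi.single 1 1) i) ^ 2))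
        + δ * (∑ i, (fderiv ℝ u y (Pi.single 2 1) i) ^ 2)
        + (μ + lam) * (fderiv ℝ u y (Pi.single 0 1) 0 + fderiv ℝ u y (Pi.single 1 1) 1
            + fderiv ℝ u y (Pi.single 2 1) 2) ^ 2 := by
  intro u hu y
  exact alg_aux μ δ lam hμδ hδ hlam (fun i j => fderiv ℝ u y (Pi.single j 1) i)
end
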